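/- Theorem 5, part 1 (no overshooting of the true configuration). In the normal means model, for any sequence of true vectors β* = β*_n with |S_{β*}| = o(n), the variational approximation satisfies E_{β*} q^n({S : S ⊋ S*}) → 0 as n → ∞, where q^n({S : S ⊋ S*}) = Σ_{S strictly containing S*} Π_{i∈S} φ_i · Π_{i∉S} (1−φ_i) and S* = S_{β*}. -/

import Mathlib

open MeasureTheory ProbabilityTheory Real Filter Asymptotics
open scoped ENNReal NNReal Classical Topology

noncomputable section

namespace VB

/-- The configuration (support) of a mean vector. -/
def config {n : ℕ} (β : Fin n → ℝ) : Finset (Fin n) :=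
  Finset.univ.filter fun i => β i ≠ 0

/-- The logit function. -/
def logit (t : ℝ) : ℝ := Real.log (t / (1 - t))

/-- The prior inclusion probability `λ_n = n^{-(a+1)}`. -/
def lamn (a : ℝ) (n : ℕ) : ℝ := (n : ℝ) ^ (-(a + 1))

/-- The inclusion log-odds of the variational approximation:
`logit(φ_i) = logit(λ_n) - log z + (α/2) y_i²`, with `z = (1 + α/γ)^{1/2}`. -/
def logitPhi (α γ a : ℝ) (n : ℕ) (yi : ℝ) : ℝ :=
  logit (lamn a n) - Real.log (Real.sqrt (1 + α / γ)) + α / 2 * yi ^ 2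

/-- The inclusion probability `φ_i` of the variational approximation. -/
def phi (α γ a : ℝ) (n : ℕ) (yi : ℝ) : ℝ :=
  1 / (1 + Real.exp (-logitPhi α γ a n yi))

/-- The variational approximation `q^n = ⊗_i [φ_i N(y_i, (α+γ)⁻¹) + (1-φ_i) δ₀]`. -/
def qn (α γ a : ℝ) (n : ℕ) (y : Fin n → ℝ) : Measure (Fin n → ℝ) :=
  Measure.pi fun i =>
    ENNReal.ofReal (phi α γ a n (y i)) •
        gaussianReal (y i) (Real.toNNReal (α + γ)⁻¹) +
      ENNReal.ofReal (1 - phi α γ a n (y i)) • Measure.dirac 0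

/-- The induced variational distribution over configurations:
`q^n(S) = Π_{i∈S} φ_i · Π_{i∉S} (1-φ_i)`. -/
def qS (α γ a : ℝ) (n : ℕ) (y : Fin n → ℝ) (S : Finset (Fin n)) : ℝ :=
  (∏ i ∈ S, phi α γ a n (y i)) * ∏ i ∈ Sᶜ, (1 - phi α γ a n (y i))

/-- The sampling distribution: `y_i ~ N(β_i, 1)` independent. -/
def Pd {n : ℕ} (β : Fin n → ℝ) : Measure (Fin n → ℝ) :=
  Measure.pi fun i => gaussianReal (β i) 1

end VB

/-!
Only coordinates outside `S*` can make a configuration overshoot `S*`, so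
`q^n({S : S ⊋ S*}) ≤ 1 - ∏_{i ∉ S*} (1 - φ_i) ≤ ∑_{i ∉ S*} φ_i`. For `i ∉ S*` we have
`y_i ~ N(0, 1)`, and `φ_i ≤ exp (logit φ_i) = λ_n / (1 - λ_n) · z⁻¹ · exp (α y_i² / 2)`, whose
Gaussian mean is finite because `α < 1`. The expectation is therefore `O(n λ_n) = O(n^{-a})`.
-/

namespace Finset

theorem one_sub_sum_le_prod_one_sub {ι : Type*} [DecidableEq ι] (u : Finset ι) {p : ι → ℝ}
    (h0 : ∀ i, 0 ≤ p i) (h1 : ∀ i, p i ≤ 1) :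
    1 - ∑ i ∈ u, p i ≤ ∏ i ∈ u, (1 - p i) := by
  induction u using Finset.induction_on with
  | empty => simp
  | insert b u hb ih =>
    rw [sum_insert hb, prod_insert hb]
    have hsum : 0 ≤ ∑ i ∈ u, p i := sum_nonneg fun i _ => h0 i
    have hprod : ∏ i ∈ u, (1 - p i) ≤ 1 :=
      prod_le_one (fun i _ => sub_nonneg.2 (h1 i)) fun i _ => sub_le_self _ (h0 i)
    nlinarith [h0 b, h1 b]

end Finset

namespace Real

theorem sigmoid_le_exp (x : ℝ) : sigmoid x ≤ exp x := by
  rw [sigmoid_def, ← inv_inv (exp x), ← exp_neg]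
  exact inv_anti₀ (exp_pos _) (le_add_of_nonneg_left zero_le_one)

end Real

namespace VB

open Finset

section BernoulliWeight

variable {ι : Type*} [Fintype ι] [DecidableEq ι]

def bernoulliWeight (p : ι → ℝ) (S : Finset ι) : ℝ :=
  (∏ i ∈ S, p i) * ∏ i ∈ Sᶜ, (1 - p i)

theorem bernoulliWeight_nonneg {p : ι → ℝ} (h0 : ∀ i, 0 ≤ p i) (h1 : ∀ i, p i ≤ 1)
    (S : Finset ι) : 0 ≤ bernoulliWeight p S :=
  mul_nonneg (prod_nonneg fun i _ => h0 i) (prod_nonneg fun i _ => sub_nonneg.2 (h1 i))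

theorem sum_powerset_bernoulliWeight (p : ι → ℝ) (s : Finset ι) :
    ∑ S ∈ s.powerset, bernoulliWeight p S = ∏ i ∈ sᶜ, (1 - p i) := by
  calc ∑ S ∈ s.powerset, bernoulliWeight p S
      = ∑ S ∈ s.powerset, (∏ i ∈ S, p i) * (∏ i ∈ s \ S, (1 - p i)) *
          ∏ i ∈ sᶜ, (1 - p i) := by
        refine sum_congr rfl fun S hS => ?_
        rw [bernoulliWeight, mul_assoc,
          ← prod_sdiff (compl_subset_compl.2 (mem_powerset.1 hS)), compl_sdiff_compl]
    _ = (∏ i ∈ s, (p i + (1 - p i))) * ∏ i ∈ sᶜ, (1 - p i) := by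
        rw [← sum_mul, prod_add]
    _ = ∏ i ∈ sᶜ, (1 - p i) := by simp

theorem sum_bernoulliWeight (p : ι → ℝ) : ∑ S, bernoulliWeight p S = 1 := by
  simpa using sum_powerset_bernoulliWeight p univ

theorem sum_ssuperset_bernoulliWeight_le {p : ι → ℝ} (h0 : ∀ i, 0 ≤ p i) (h1 : ∀ i, p i ≤ 1)
    (s : Finset ι) :
    ∑ S ∈ univ.filter (s ⊂ ·), bernoulliWeight p S ≤ ∑ i ∈ sᶜ, p i := by
  have hsplit := sum_add_sum_compl s.powerset (bernoulliWeight p)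
  rw [sum_bernoulliWeight, sum_powerset_bernoulliWeight] at hsplit
  calc ∑ S ∈ univ.filter (s ⊂ ·), bernoulliWeight p S
      ≤ ∑ S ∈ s.powersetᶜ, bernoulliWeight p S :=
        sum_le_sum_of_subset_of_nonneg
          (fun S hS => by simpa using (mem_filter.1 hS).2.not_subset)
          fun S _ _ => bernoulliWeight_nonneg h0 h1 S
    _ = 1 - ∏ i ∈ sᶜ, (1 - p i) := by linarith
    _ ≤ ∑ i ∈ sᶜ, p i := by linarith [one_sub_sum_le_prod_one_sub sᶜ h0 h1]

end BernoulliWeight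

theorem phi_eq_sigmoid (α γ a : ℝ) (n : ℕ) (x : ℝ) :
    phi α γ a n x = sigmoid (logitPhi α γ a n x) := by
  rw [phi, sigmoid_def, one_div]

theorem phi_nonneg (α γ a : ℝ) (n : ℕ) (x : ℝ) : 0 ≤ phi α γ a n x :=
  phi_eq_sigmoid α γ a n x ▸ sigmoid_nonneg _

theorem phi_le_one (α γ a : ℝ) (n : ℕ) (x : ℝ) : phi α γ a n x ≤ 1 :=
  phi_eq_sigmoid α γ a n x ▸ sigmoid_le_one _

theorem qS_nonneg (α γ a : ℝ) (n : ℕ) (y : Fin n → ℝ) (S : Finset (Fin n)) :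
    0 ≤ qS α γ a n y S :=
  bernoulliWeight_nonneg (fun _ => phi_nonneg ..) (fun _ => phi_le_one ..) S

theorem phi_le (α γ a : ℝ) (n : ℕ) (x : ℝ) :
    phi α γ a n x ≤
      exp (logit (lamn a n)) * (exp (-log √(1 + α / γ)) * exp (α / 2 * x ^ 2)) := by
  rw [← exp_add, ← exp_add, ← add_assoc, ← sub_eq_add_neg, phi_eq_sigmoid]
  exact sigmoid_le_exp _

theorem continuous_phi (α γ a : ℝ) (n : ℕ) : Continuous (phi α γ a n) := by
  simp_rw [funext (phi_eq_sigmoid α γ a n), logitPhi]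
  exact continuous_sigmoid.comp (by fun_prop)

theorem integrable_phi (α γ a : ℝ) (n : ℕ) (μ : Measure ℝ) [IsFiniteMeasure μ] :
    Integrable (phi α γ a n) μ :=
  .of_bound (continuous_phi α γ a n).aestronglyMeasurable 1 <| ae_of_all _ fun x => by
    rw [norm_of_nonneg (phi_nonneg α γ a n x)]
    exact phi_le_one α γ a n x

theorem integrable_exp_mul_sq_gaussianReal {c : ℝ} (hc : c < 1 / 2) :
    Integrable (fun x => exp (c * x ^ 2)) (gaussianReal 0 1) := by
  rw [gaussianReal_of_var_ne_zero _ one_ne_zero, integrable_withDensity_iff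
    (measurable_gaussianPDF _ _) (ae_of_all _ fun x => ENNReal.ofReal_lt_top)]
  have hdensity : (fun x => exp (c * x ^ 2) * (gaussianPDF 0 1 x).toReal) =
      fun x => (√(2 * π))⁻¹ * exp (-(1 / 2 - c) * x ^ 2) := by
    funext x
    rw [gaussianPDF, ENNReal.toReal_ofReal (gaussianPDFReal_nonneg _ _ _), gaussianPDFReal]
    push_cast
    rw [mul_one, mul_comm (exp _), mul_assoc, ← exp_add]
    ring_nf
  rw [hdensity]
  exact (integrable_exp_neg_mul_sq (by linarith)).const_mul _

theorem integral_phi_gaussianReal_le {α : ℝ} (hα : α < 1) (γ a : ℝ) (n : ℕ) :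
    ∫ x, phi α γ a n x ∂gaussianReal 0 1 ≤ exp (logit (lamn a n)) *
      (exp (-log √(1 + α / γ)) * ∫ x, exp (α / 2 * x ^ 2) ∂gaussianReal 0 1) := by
  rw [← integral_const_mul, ← integral_const_mul]
  exact integral_mono (integrable_phi α γ a n _)
    (((integrable_exp_mul_sq_gaussianReal (by linarith)).const_mul _).const_mul _)
    (phi_le α γ a n)

theorem integral_overshoot_le (α γ a : ℝ) {n : ℕ} (β : Fin n → ℝ) :
    ∫ y, (∑ S ∈ univ.filter (config β ⊂ ·), qS α γ a n y S) ∂Pd β ≤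
      n * ∫ x, phi α γ a n x ∂gaussianReal 0 1 := by
  have hintegrable : ∀ i, Integrable (fun y : Fin n → ℝ => phi α γ a n (y i)) (Pd β) :=
    fun i => integrable_comp_eval (integrable_phi α γ a n _)
  calc ∫ y, (∑ S ∈ univ.filter (config β ⊂ ·), qS α γ a n y S) ∂Pd β
      ≤ ∫ y, ∑ i ∈ (config β)ᶜ, phi α γ a n (y i) ∂Pd β := by
        refine integral_mono_of_nonneg (ae_of_all _ fun y => sum_nonneg fun S _ => qS_nonneg ..)
          (integrable_finsetSum _ fun i _ => hintegrable i) (ae_of_all _ fun y => ?_)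
        exact sum_ssuperset_bernoulliWeight_le (fun _ => phi_nonneg ..)
          (fun _ => phi_le_one ..) _
    _ = ∑ i ∈ (config β)ᶜ, ∫ x, phi α γ a n x ∂gaussianReal 0 1 := by
        rw [integral_finsetSum _ fun i _ => hintegrable i]
        refine sum_congr rfl fun i hi => ?_
        have hβi : β i = 0 := by simpa [config] using hi
        rw [Pd, integral_comp_eval (continuous_phi α γ a n).aestronglyMeasurable, hβi]
    _ ≤ n * ∫ x, phi α γ a n x ∂gaussianReal 0 1 := by
        rw [sum_const, nsmul_eq_mul]
        gcongr
        · exact integral_nonneg (phi_nonneg α γ a n)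
        · simpa using card_le_univ (config β)ᶜ

theorem tendsto_natCast_mul_exp_logit_lamn {a : ℝ} (ha : 0 < a) :
    Tendsto (fun n : ℕ => n * exp (logit (lamn a n))) atTop (𝓝 0) := by
  have hpow : ∀ {b : ℝ}, 0 < b → Tendsto (fun n : ℕ => (n : ℝ) ^ (-b)) atTop (𝓝 0) :=
    fun hb => (tendsto_rpow_neg_atTop hb).comp tendsto_natCast_atTop_atTop
  have hlim := (hpow ha).div (tendsto_const_nhds.sub (hpow (by linarith : 0 < a + 1)))
    (by norm_num : (1 : ℝ) - 0 ≠ 0)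
  rw [zero_div] at hlim
  refine hlim.congr' <| (eventually_ge_atTop 2).mono fun n hn => ?_
  have hn1 : (1 : ℝ) < n := by exact_mod_cast hn
  have hlam : lamn a n < 1 := rpow_lt_one_of_one_lt_of_neg hn1 (by linarith)
  have hlam0 : 0 < lamn a n := rpow_pos_of_pos (by linarith) _
  change (n : ℝ) ^ (-a) / (1 - lamn a n) = n * exp (logit (lamn a n))
  rw [logit, exp_log (div_pos hlam0 (sub_pos.2 hlam)), mul_div_assoc', lamn,
    ← rpow_one_add' (by linarith) (by linarith), show 1 + -(a + 1) = -a by ring]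

theorem no_overshoot_general
    (α γ a : ℝ) (hα : α ∈ Set.Ioo (0 : ℝ) 1) (ha : 0 < a)
    (β : ∀ n : ℕ, Fin n → ℝ) :
    Tendsto (fun n =>
        ∫ y, (∑ S ∈ Finset.univ.filter (fun S : Finset (Fin n) => config (β n) ⊂ S),
            qS α γ a n y S) ∂ Pd (β n))
      atTop (𝓝 0) := by
  set C := exp (-log √(1 + α / γ)) * ∫ x, exp (α / 2 * x ^ 2) ∂gaussianReal 0 1
  have hbound : ∀ n : ℕ, ∫ y, (∑ S ∈ univ.filter (config (β n) ⊂ ·), qS α γ a n y S)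
      ∂Pd (β n) ≤ n * exp (logit (lamn a n)) * C := fun n => by
    rw [mul_assoc]
    exact (integral_overshoot_le α γ a (β n)).trans
      (mul_le_mul_of_nonneg_left (integral_phi_gaussianReal_le hα.2 γ a n) n.cast_nonneg)
  refine squeeze_zero (fun n => integral_nonneg fun y => sum_nonneg fun S _ => qS_nonneg ..)
    hbound ?_
  simpa using (tendsto_natCast_mul_exp_logit_lamn ha).mul_const C

/-- **Theorem 5, part 1** (no overshooting of the true configuration).
For any sequence of true vectors `β*` with `|S_{β*}| = o(n)`, the variational
approximation satisfies `E_{β*} q^n({S : S ⊋ S*}) → 0`. -/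
theorem no_overshoot
    (α γ a : ℝ) (hα : α ∈ Set.Ioo (0 : ℝ) 1) (hγ : 0 < γ) (ha : 0 < a)
    (β : ∀ n : ℕ, Fin n → ℝ)
    (hβ : (fun n => ((config (β n)).card : ℝ)) =o[atTop] fun n => (n : ℝ)) :
    Tendsto (fun n =>
        ∫ y, (∑ S ∈ Finset.univ.filter (fun S : Finset (Fin n) => config (β n) ⊂ S),
            qS α γ a n y S) ∂ Pd (β n))
      atTop (𝓝 0) :=
  no_overshoot_general α γ a hα ha β

end VB
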